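/- Let q ≥ 1 and let a₁, …, a_q be real numbers that are linearly independent over ℚ. Let A be the 2q×2q block-diagonal skew-symmetric matrix whose j-th 2×2 diagonal block is [[0, −a_j],[a_j, 0]], and define the linear forms C₀(x) = x₁ + x₃ + ⋯ + x_{2q−1} and C₁(x) = x₂ + x₄ + ⋯ + x_{2q} on ℝ^{2q}. Then for every nonzero x ∈ ℝ^{2q} there exists t ≥ 0 such that C₀(exp(tA)x) · C₁(exp(tA)x) > 0; in particular every nonzero orbit of ẋ = Ax leaves the cone {x : C₀(x)·C₁(x) ≤ 0}. -/

import Mathlib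

/-!
Identify the `j`-th coordinate block of `ℝ^{2q}` with `ℂ`, so that `x` becomes `(z_j)`. Along the
orbit, `C₀ + i C₁` is the trigonometric polynomial `S(t) = ∑ⱼ zⱼ e^{i aⱼ t}` and
`C₀ C₁ = Im (S²) / 2`. By rational independence no frequency `aⱼ + a_k` of `S²` vanishes, so
`C₀ C₁` has time mean zero. If `C₀ C₁ ≤ 0` for all `t ≥ 0`, then `|C₀ C₁|` has mean zero as well,
hence so does `C₀ C₁ · v` for every bounded `v`. For `v(t) = e^{2 i a_J t}` with `z_J ≠ 0`,
independence leaves the single resonant term `j = k = J`, whose mean `-conj (z_J²) / 4i` is not zero.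
-/

open Matrix Filter

noncomputable section

/-- The `2q×2q` block-diagonal skew-symmetric matrix whose `j`-th `2×2` diagonal block is
`[[0, -a_j],[a_j, 0]]`, indexed by `Fin q × Fin 2`. -/
def blockDiagRot {q : ℕ} (a : Fin q → ℝ) :
    Matrix (Fin q × Fin 2) (Fin q × Fin 2) ℝ :=
  Matrix.of fun p p' =>
    if p.1 = p'.1 then !![0, -(a p.1); a p.1, 0] p.2 p'.2 else 0

/-- The flow `t ↦ exp(tA)`. -/
def expFlow {q : ℕ} (a : Fin q → ℝ) (t : ℝ) :
    EuclideanSpace ℝ (Fin q × Fin 2) →L[ℝ] EuclideanSpace ℝ (Fin q × Fin 2) :=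
  NormedSpace.exp (t • LinearMap.toContinuousLinearMap
    (Matrix.toEuclideanLin (blockDiagRot a)))

/-- The linear form `C₀ : x ↦ x₁ + x₃ + ⋯ + x_{2q-1}` (sum of the first coordinates of
the `2×2` blocks). -/
def C₀fun {q : ℕ} (x : EuclideanSpace ℝ (Fin q × Fin 2)) : ℝ := ∑ j : Fin q, x (j, 0)

/-- The linear form `C₁ : x ↦ x₂ + x₄ + ⋯ + x_{2q}` (sum of the second coordinates of
the `2×2` blocks). -/
def C₁fun {q : ℕ} (x : EuclideanSpace ℝ (Fin q × Fin 2)) : ℝ := ∑ j : Fin q, x (j, 1)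

open Topology ComplexConjugate

def wave (μ t : ℝ) : ℂ := Complex.exp (μ * t * Complex.I)

theorem wave_mul_wave (μ ν t : ℝ) : wave μ t * wave ν t = wave (μ + ν) t := by
  simp only [wave, ← Complex.exp_add]
  push_cast
  ring_nf

theorem conj_wave (μ t : ℝ) : conj (wave μ t) = wave (-μ) t := by
  simp only [wave, ← Complex.exp_conj, map_mul, Complex.conj_ofReal, Complex.conj_I]
  push_cast
  ring_nf

theorem wave_zero_left (t : ℝ) : wave 0 t = 1 := by simp [wave]

theorem norm_wave (μ t : ℝ) : ‖wave μ t‖ = 1 := by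
  simpa [wave] using Complex.norm_exp_ofReal_mul_I (μ * t)

@[fun_prop]
theorem continuous_wave (μ : ℝ) : Continuous (wave μ) := by
  unfold wave
  fun_prop

theorem hasDerivAt_wave (μ t : ℝ) : HasDerivAt (wave μ) (μ * Complex.I * wave μ t) t := by
  have h : HasDerivAt (wave μ) _ t :=
    (((hasDerivAt_id t).ofReal_comp).const_mul (μ : ℂ)).mul_const Complex.I |>.cexp
  convert h using 1
  simp [wave, mul_comm]

theorem norm_integral_wave_le {μ : ℝ} (hμ : μ ≠ 0) (T : ℝ) :
    ‖∫ t in (0 : ℝ)..T, wave μ t‖ ≤ 2 / |μ| := by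
  have hμI : (μ : ℂ) * Complex.I ≠ 0 := by simp [hμ]
  have hint : ∫ t in (0 : ℝ)..T, wave μ t = (wave μ T - 1) / (μ * Complex.I) := by
    simp only [wave, mul_right_comm _ _ Complex.I]
    rw [integral_exp_mul_complex hμI]
    simp
  rw [hint, norm_div, div_le_div_iff₀ (norm_pos_iff.2 hμI) (abs_pos.2 hμ)]
  calc ‖wave μ T - 1‖ * |μ| ≤ (‖wave μ T‖ + ‖(1 : ℂ)‖) * |μ| := by gcongr; exact norm_sub_le _ _
    _ = 2 * ‖(μ : ℂ) * Complex.I‖ := by simp [norm_wave]; norm_num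

def HasTimeMean (f : ℝ → ℂ) (m : ℂ) : Prop :=
  Tendsto (fun T : ℝ => (∫ t in (0 : ℝ)..T, f t) / T) atTop (𝓝 m)

namespace HasTimeMean

variable {f g : ℝ → ℂ} {m n : ℂ}

theorem const_mul (hf : HasTimeMean f m) (c : ℂ) : HasTimeMean (fun t => c * f t) (c * m) := by
  simpa only [HasTimeMean, intervalIntegral.integral_const_mul, mul_div_assoc] using
    Tendsto.const_mul c hf

theorem star (hf : HasTimeMean f m) : HasTimeMean (fun t => conj (f t)) (conj m) := by
  simpa only [HasTimeMean, intervalIntegral.intervalIntegral_conj, map_div₀, Complex.conj_ofReal,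
    Function.comp_def] using (Complex.continuous_conj.tendsto m).comp hf

theorem sub (hf : HasTimeMean f m) (hg : HasTimeMean g n) (hfc : Continuous f)
    (hgc : Continuous g) : HasTimeMean (fun t => f t - g t) (m - n) := by
  simpa only [HasTimeMean, intervalIntegral.integral_sub (hfc.intervalIntegrable _ _)
    (hgc.intervalIntegrable _ _), sub_div] using Tendsto.sub hf hg

theorem ofReal_mul_of_nonpos {g : ℝ → ℝ} {v : ℝ → ℂ} {K : ℝ}
    (hg0 : HasTimeMean (fun t => g t) 0) (hgc : Continuous g) (hg : ∀ t, 0 ≤ t → g t ≤ 0)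
    (hv : ∀ t, ‖v t‖ ≤ K) : HasTimeMean (fun t => g t * v t) 0 := by
  refine squeeze_zero_norm' ?_ (by simpa using (hg0.norm.const_mul K))
  filter_upwards [eventually_gt_atTop 0] with T hT
  have hbound : ‖∫ t in (0 : ℝ)..T, (g t : ℂ) * v t‖ ≤ ∫ t in (0 : ℝ)..T, K * -g t := by
    refine intervalIntegral.norm_integral_le_of_norm_le hT.le
      (Eventually.of_forall fun t ht => ?_) (Continuous.intervalIntegrable (by fun_prop) _ _)
    rw [norm_mul, Complex.norm_real, Real.norm_of_nonpos (hg t ht.1.le), mul_comm]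
    exact mul_le_mul_of_nonneg_right (hv t) (neg_nonneg.2 (hg t ht.1.le))
  have hK : ∫ t in (0 : ℝ)..T, K * -g t ≤ K * ‖∫ t in (0 : ℝ)..T, (g t : ℂ)‖ := by
    rw [intervalIntegral.integral_ofReal, Complex.norm_real, intervalIntegral.integral_const_mul,
      intervalIntegral.integral_neg]
    exact mul_le_mul_of_nonneg_left (neg_le_abs _) ((norm_nonneg _).trans (hv 0))
  simp only [norm_div, Complex.norm_real, Real.norm_eq_abs]
  rw [← mul_div_assoc]
  gcongr
  exact hbound.trans hK

end HasTimeMean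

theorem hasTimeMean_sum {ι : Type*} (s : Finset ι) {f : ι → ℝ → ℂ} {m : ι → ℂ}
    (hf : ∀ i ∈ s, HasTimeMean (f i) (m i)) (hfc : ∀ i ∈ s, Continuous (f i)) :
    HasTimeMean (fun t => ∑ i ∈ s, f i t) (∑ i ∈ s, m i) := by
  unfold HasTimeMean
  simp_rw [intervalIntegral.integral_finsetSum fun i hi => (hfc i hi).intervalIntegrable _ _,
    Finset.sum_div]
  exact tendsto_finsetSum s hf

theorem hasTimeMean_wave (μ : ℝ) : HasTimeMean (wave μ) (if μ = 0 then 1 else 0) := by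
  split_ifs with hμ
  · subst hμ
    refine tendsto_const_nhds.congr' ?_
    filter_upwards [eventually_gt_atTop 0] with T hT
    simp [wave_zero_left, hT.ne']
  · refine squeeze_zero_norm' ?_ (tendsto_inv_atTop_zero.const_mul (2 / |μ|) |>.trans (by simp))
    filter_upwards [eventually_gt_atTop 0] with T hT
    rw [norm_div, Complex.norm_real, Real.norm_of_nonneg hT.le, div_eq_mul_inv]
    exact mul_le_mul_of_nonneg_right (norm_integral_wave_le hμ T) (inv_nonneg.2 hT.le)

theorem hasTimeMean_sum_mul_wave {ι : Type*} [Fintype ι] (γ : ι → ℂ) (μ : ι → ℝ) :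
    HasTimeMean (fun t => ∑ i, γ i * wave (μ i) t) (∑ i, if μ i = 0 then γ i else 0) := by
  refine hasTimeMean_sum _ (fun i _ => ?_) (fun i _ => by fun_prop)
  simpa using (hasTimeMean_wave (μ i)).const_mul (γ i)

namespace LinearIndependent

variable {ι K : Type*} [Field K] [CharZero K] {a : ι → K}

theorem single_add_single_add_single_eq_zero (ha : LinearIndependent ℚ a) (j k J : ι) (r : ℚ)
    (h : a j + a k + r * a J = 0) :
    Finsupp.single j (1 : ℚ) + Finsupp.single k 1 + Finsupp.single J r = 0 :=
  linearIndependent_iff.1 ha _ (by simpa [Finsupp.linearCombination_single, Rat.smul_def] using h)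

theorem add_ne_zero (ha : LinearIndependent ℚ a) (j k : ι) : a j + a k ≠ 0 := fun h => by
  have := DFunLike.congr_fun (ha.single_add_single_add_single_eq_zero j k j 0 (by simpa using h)) j
  by_cases hkj : k = j <;> simp [hkj] at this

theorem add_add_two_mul_ne_zero (ha : LinearIndependent ℚ a) (j k J : ι) :
    a j + a k + 2 * a J ≠ 0 := fun h => by
  have := DFunLike.congr_fun (ha.single_add_single_add_single_eq_zero j k J 2 (by simpa using h)) J
  by_cases hjJ : j = J <;> by_cases hkJ : k = J <;> simp [hjJ, hkJ] at this <;> norm_num at this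

theorem add_eq_two_mul_iff (ha : LinearIndependent ℚ a) {j k J : ι} :
    a j + a k = 2 * a J ↔ j = J ∧ k = J := by
  refine ⟨fun h => ?_, fun ⟨hj, hk⟩ => by rw [hj, hk, two_mul]⟩
  have := DFunLike.congr_fun
    (ha.single_add_single_add_single_eq_zero j k J (-2) (by push_cast; linear_combination h)) j
  by_cases hJj : J = j <;> by_cases hkj : k = j <;> simp [hJj, hkj] at this ⊢
  norm_num at this

end LinearIndependent

theorem eq_exp_smul_apply_of_hasDerivAt {E : Type*} [NormedAddCommGroup E] [NormedSpace ℝ E]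
    [CompleteSpace E] (L : E →L[ℝ] E) {γ : ℝ → E} (hγ : ∀ s, HasDerivAt γ (L (γ s)) s) (t : ℝ) :
    γ t = NormedSpace.exp (t • L) (γ 0) := by
  have hderiv : ∀ s, HasDerivAt (fun u => NormedSpace.exp ((-u) • L) (γ u)) 0 s := by
    intro s
    have hexp : HasDerivAt (fun u : ℝ => NormedSpace.exp ((-u) • L))
        (-(NormedSpace.exp ((-s) • L) * L)) s := by
      simpa [Function.comp_def] using
        (hasDerivAt_exp_smul_const (𝕂 := ℝ) L (-s)).scomp s (hasDerivAt_neg s)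
    refine (hexp.clm_apply (hγ s)).congr_deriv ?_
    simp
  have hconst := is_const_of_deriv_eq_zero (fun s => (hderiv s).differentiableAt)
    (fun s => (hderiv s).deriv) t 0
  simp only [neg_zero, zero_smul, NormedSpace.exp_zero, one_apply_eq_self] at hconst
  have hball : ∀ M : E →L[ℝ] E, M ∈ Metric.eball 0 (NormedSpace.expSeries ℝ (E →L[ℝ] E)).radius :=
    fun M => by simp [NormedSpace.expSeries_radius_eq_top]
  rw [← hconst, ← mul_apply_eq_comp, ← NormedSpace.exp_add_of_commute_of_mem_ball
    ((Commute.refl L).smul_left t |>.smul_right (-t)) (hball _) (hball _), ← add_smul,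
    add_neg_cancel, zero_smul, NormedSpace.exp_zero, one_apply_eq_self]

section

variable {q : ℕ} (a : Fin q → ℝ) (x : EuclideanSpace ℝ (Fin q × Fin 2))

def complexCoord (j : Fin q) : ℂ := x (j, 0) + x (j, 1) * Complex.I

def blockRotation (t : ℝ) : EuclideanSpace ℝ (Fin q × Fin 2) :=
  WithLp.toLp 2 fun p =>
    ![(complexCoord x p.1 * wave (a p.1) t).re, (complexCoord x p.1 * wave (a p.1) t).im] p.2

def signal (t : ℝ) : ℂ := ∑ j, complexCoord x j * wave (a j) t

-- the coefficient of `wave ν` in `signal a x ^ 2`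
def sqCoeff (ν : ℝ) : ℂ :=
  ∑ p : Fin q × Fin q, if a p.1 + a p.2 = ν then complexCoord x p.1 * complexCoord x p.2 else 0

variable {x} in
theorem exists_complexCoord_ne_zero (hx : x ≠ 0) :
    ∃ j, complexCoord x j ≠ 0 := by
  contrapose! hx
  ext ⟨j, i⟩
  have h := Complex.ext_iff.1 (hx j)
  simp only [complexCoord, Complex.add_re, Complex.ofReal_re, Complex.mul_re, Complex.ofReal_im,
    Complex.I_re, Complex.I_im, Complex.add_im, Complex.mul_im, Complex.zero_re,
    Complex.zero_im] at h
  fin_cases i <;> simp_all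

theorem blockRotation_zero : blockRotation a x 0 = x := by
  ext ⟨j, i⟩
  fin_cases i <;> simp [blockRotation, complexCoord, wave]

theorem blockDiagRot_mulVec (v : Fin q × Fin 2 → ℝ) (j : Fin q) (i : Fin 2) :
    (blockDiagRot a *ᵥ v) (j, i) = ![-(a j * v (j, 1)), a j * v (j, 0)] i := by
  simp only [mulVec, dotProduct, blockDiagRot, of_apply, Fintype.sum_prod_type]
  rw [Finset.sum_eq_single j (fun k _ hk => by simp [Ne.symm hk]) (by simp)]
  fin_cases i <;> simp [Fin.sum_univ_two]

theorem hasDerivAt_blockRotation (s : ℝ) : HasDerivAt (blockRotation a x)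
    (LinearMap.toContinuousLinearMap (toEuclideanLin (blockDiagRot a)) (blockRotation a x s)) s := by
  have hcoord : ∀ p : Fin q × Fin 2, HasDerivAt (fun t => blockRotation a x t p)
      ((blockDiagRot a *ᵥ (blockRotation a x s).ofLp) p) s := by
    rintro ⟨j, i⟩
    have hw := (hasDerivAt_wave (a j) s).const_mul (complexCoord x j)
    rw [blockDiagRot_mulVec]
    fin_cases i
    · refine (Complex.reCLM.hasFDerivAt.comp_hasDerivAt s hw :
        HasDerivAt (fun t => (complexCoord x j * wave (a j) t).re) _ s).congr_deriv ?_
      simp [blockRotation]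
      ring
    · refine (Complex.imCLM.hasFDerivAt.comp_hasDerivAt s hw :
        HasDerivAt (fun t => (complexCoord x j * wave (a j) t).im) _ s).congr_deriv ?_
      simp [blockRotation]
      ring
  exact (PiLp.continuousLinearEquiv 2 ℝ _).symm.toContinuousLinearMap.hasFDerivAt.comp_hasDerivAt
    s (hasDerivAt_pi.2 hcoord)

theorem expFlow_apply (t : ℝ) : expFlow a t x = blockRotation a x t := by
  rw [eq_exp_smul_apply_of_hasDerivAt _ (hasDerivAt_blockRotation a x) t, blockRotation_zero]
  rfl

@[fun_prop]
theorem continuous_signal : Continuous (signal a x) := by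
  unfold signal
  fun_prop

theorem C₀fun_mul_C₁fun_expFlow (t : ℝ) :
    C₀fun (expFlow a t x) * C₁fun (expFlow a t x) = (signal a x t ^ 2).im / 2 := by
  have hC₀ : C₀fun (blockRotation a x t) = (signal a x t).re := by
    simp [C₀fun, signal, blockRotation, Complex.re_sum]
  have hC₁ : C₁fun (blockRotation a x t) = (signal a x t).im := by
    simp [C₁fun, signal, blockRotation, Complex.im_sum]
  rw [expFlow_apply, hC₀, hC₁, sq, Complex.mul_im]
  ring

theorem signal_sq_mul_wave (μ t : ℝ) :
    signal a x t ^ 2 * wave μ t = ∑ p : Fin q × Fin q,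
      complexCoord x p.1 * complexCoord x p.2 * wave (a p.1 + a p.2 + μ) t := by
  rw [signal, sq, Finset.sum_mul_sum, ← Finset.univ_product_univ, Finset.sum_product,
    Finset.sum_mul]
  refine Finset.sum_congr rfl fun j _ => ?_
  rw [Finset.sum_mul]
  refine Finset.sum_congr rfl fun k _ => ?_
  rw [← wave_mul_wave, ← wave_mul_wave]
  ring

theorem hasTimeMean_signal_sq_mul_wave (μ : ℝ) :
    HasTimeMean (fun t => signal a x t ^ 2 * wave μ t) (sqCoeff a x (-μ)) := by
  simp only [signal_sq_mul_wave, sqCoeff, ← add_eq_zero_iff_eq_neg]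
  exact hasTimeMean_sum_mul_wave _ _

theorem hasTimeMean_im_signal_sq_mul_wave (μ : ℝ) :
    HasTimeMean (fun t => ((signal a x t ^ 2).im / 2 : ℝ) * wave μ t)
      ((4 * Complex.I)⁻¹ * (sqCoeff a x (-μ) - conj (sqCoeff a x μ))) := by
  -- `Im w = (w - conj w) / 2i` and `conj (wave (-μ) t) = wave μ t`
  have hpoint : ∀ t, (((signal a x t ^ 2).im / 2 : ℝ) : ℂ) * wave μ t = (4 * Complex.I)⁻¹ *
      (signal a x t ^ 2 * wave μ t - conj (signal a x t ^ 2 * wave (-μ) t)) := by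
    intro t
    rw [map_mul, conj_wave, neg_neg, ← sub_mul, Complex.sub_conj]
    field_simp
    push_cast
    ring
  simp only [hpoint]
  refine HasTimeMean.const_mul (HasTimeMean.sub (hasTimeMean_signal_sq_mul_wave a x μ) ?_
    (by fun_prop) (by fun_prop)) _
  simpa using (hasTimeMean_signal_sq_mul_wave a x (-μ)).star

variable {a}

theorem sqCoeff_zero (ha : LinearIndependent ℚ a) : sqCoeff a x 0 = 0 :=
  Finset.sum_eq_zero fun p _ => if_neg (ha.add_ne_zero p.1 p.2)

theorem sqCoeff_neg_two_mul (ha : LinearIndependent ℚ a) (J : Fin q) :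
    sqCoeff a x (-(2 * a J)) = 0 :=
  Finset.sum_eq_zero fun p _ =>
    if_neg fun h => ha.add_add_two_mul_ne_zero p.1 p.2 J (by linear_combination h)

theorem sqCoeff_two_mul (ha : LinearIndependent ℚ a) (J : Fin q) :
    sqCoeff a x (2 * a J) = complexCoord x J ^ 2 := by
  rw [sqCoeff, Finset.sum_eq_single (J, J) (fun p _ hp => if_neg fun h => hp
    (Prod.ext_iff.2 (ha.add_eq_two_mul_iff.1 h))) (by simp)]
  simp [sq, two_mul]

end

theorem orbit_leaves_cone_general {q : ℕ} (a : Fin q → ℝ)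
    (ha : LinearIndependent ℚ a) :
    ∀ x : EuclideanSpace ℝ (Fin q × Fin 2), x ≠ 0 →
      ∃ t : ℝ, 0 ≤ t ∧
        (0 < C₀fun (expFlow a t x) * C₁fun (expFlow a t x) ∧
          expFlow a t x ∉ {y : EuclideanSpace ℝ (Fin q × Fin 2) |
            C₀fun y * C₁fun y ≤ 0}) := by
  intro x hx
  suffices ∃ t, 0 ≤ t ∧ 0 < C₀fun (expFlow a t x) * C₁fun (expFlow a t x) from
    this.imp fun t ⟨ht, hpos⟩ => ⟨ht, hpos, not_le.mpr hpos⟩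
  obtain ⟨J, hJ⟩ := exists_complexCoord_ne_zero hx
  simp_rw [C₀fun_mul_C₁fun_expFlow]
  by_contra! hcone
  have hmean := hasTimeMean_im_signal_sq_mul_wave a x
  have hmean_zero : HasTimeMean (fun t => ((signal a x t ^ 2).im / 2 : ℝ)) 0 := by
    simpa [wave_zero_left, sqCoeff_zero x ha] using hmean 0
  have hvanish := hmean_zero.ofReal_mul_of_nonpos (by fun_prop) hcone
    (fun t => (norm_wave (2 * a J) t).le)
  have hresonant := hmean (2 * a J)
  rw [sqCoeff_neg_two_mul x ha, sqCoeff_two_mul x ha] at hresonant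
  have := tendsto_nhds_unique hresonant hvanish
  simp [hJ] at this

/-- If `q ≥ 1` and `a₁, …, a_q` are rationally independent, then for
every nonzero `x ∈ ℝ^{2q}` there is a time `t ≥ 0` at which
`C₀(exp(tA)x) · C₁(exp(tA)x) > 0`; in particular every nonzero orbit of `ẋ = Ax` leaves
the cone `{x : C₀(x)·C₁(x) ≤ 0}`. -/
theorem orbit_leaves_cone {q : ℕ} (hq : 1 ≤ q) (a : Fin q → ℝ)
    (ha : LinearIndependent ℚ a) :
    ∀ x : EuclideanSpace ℝ (Fin q × Fin 2), x ≠ 0 →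
      ∃ t : ℝ, 0 ≤ t ∧
        (0 < C₀fun (expFlow a t x) * C₁fun (expFlow a t x) ∧
          expFlow a t x ∉ {y : EuclideanSpace ℝ (Fin q × Fin 2) |
            C₀fun y * C₁fun y ≤ 0}) :=
  orbit_leaves_cone_general a ha

end
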